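/- arXiv:1604.02471 — 2 statements merged into one kernel-verified Lean document; each statement's English description precedes it below -/
import Mathlib

section
/- Let n ≥ 2, let 𝓛 be any subset of ℤⁿ, and let 1 ≤ p ≤ n. Then the following identity of formal power series in ℤ[[z]] holds: zᵖ(1−z²)^{n−1} · Σ_{k≥0} M_𝓛(k+1, p) zᵏ = Σ_{ℓ=0}^{n} [ ϑ_𝓛^{(ℓ)}(z) · Ã_p^{(ℓ)}(z) − (1−z²)^{n−1} · B̃_{𝓛,p}^{(ℓ)}(z) ]. (This is Claim 3.5 in the proof of Theorem 2.2, multiplied through by zᵖ(1−z²)^{n−1}.) -/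
noncomputable section

open Finset PowerSeries

/-- Binomial coefficient `binom b a` with integer arguments,
zero when `a < 0` or `b < a`. -/
def ibinom (b a : ℤ) : ℤ := if a < 0 ∨ b < a then 0 else (b.toNat.choose a.toNat : ℤ)

/-- One-norm `‖μ‖` of an integer vector. -/
def onenorm {n : ℕ} (μ : Fin n → ℤ) : ℕ := ∑ i, (μ i).natAbs

/-- `Z(μ)`: number of zero coordinates. -/
def zcount {n : ℕ} (μ : Fin n → ℤ) : ℕ := (univ.filter fun i => μ i = 0).card

/-- `N_𝓛(k, ℓ)`. -/
def Ncard {n : ℕ} (L : Set (Fin n → ℤ)) (k ℓ : ℕ) : ℕ :=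
  {μ : Fin n → ℤ | μ ∈ L ∧ onenorm μ = k ∧ zcount μ = ℓ}.ncard

/-- `N_𝓛(k)`. -/
def NcardTot {n : ℕ} (L : Set (Fin n → ℤ)) (k : ℕ) : ℕ :=
  {μ : Fin n → ℤ | μ ∈ L ∧ onenorm μ = k}.ncard

/-- `ϑ_𝓛^{(ℓ)}(z) = Σ_{k≥0} N_𝓛(k,ℓ) z^k`. -/
def thetaL {n : ℕ} (L : Set (Fin n → ℤ)) (ℓ : ℕ) : PowerSeries ℤ :=
  PowerSeries.mk fun k => (Ncard L k ℓ : ℤ)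

/-- `ϑ_𝓛(z) = Σ_{k≥0} N_𝓛(k) z^k`. -/
def thetaTot {n : ℕ} (L : Set (Fin n → ℤ)) : PowerSeries ℤ :=
  PowerSeries.mk fun k => (NcardTot L k : ℤ)

/-- `N_𝓛^red(k,ℓ)`, counting elements of `C(q) ∩ 𝓛`. -/
def NcardRed {n : ℕ} (L : Set (Fin n → ℤ)) (q k ℓ : ℕ) : ℕ :=
  {μ : Fin n → ℤ | (∀ i, |μ i| < (q : ℤ)) ∧ μ ∈ L ∧ onenorm μ = k ∧ zcount μ = ℓ}.ncard

/-- `Φ_𝓛^{(ℓ)}(z) = Σ_{k≥0} N_𝓛^red(k,ℓ) z^k`. -/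
def PhiL {n : ℕ} (L : Set (Fin n → ℤ)) (q ℓ : ℕ) : PowerSeries ℤ :=
  PowerSeries.mk fun k => (NcardRed L q k ℓ : ℤ)

/-- `𝓛` is `q`-periodic: `μ ∈ 𝓛 ↔ μ + qν ∈ 𝓛`. -/
def qPeriodic {n : ℕ} (q : ℕ) (L : Set (Fin n → ℤ)) : Prop :=
  ∀ μ ν : Fin n → ℤ, μ ∈ L ↔ (μ + (q : ℤ) • ν) ∈ L

/-- `M_𝓛(k,p)`. -/
def Mcoef {n : ℕ} (L : Set (Fin n → ℤ)) (k p : ℕ) : ℤ :=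
  ∑ ℓ ∈ range (n+1), ∑ r ∈ range ((k-1+p)/2 + 1),
    (Ncard L (k-1+p-2*r) ℓ : ℤ) *
    ∑ j ∈ Icc 1 p, (-1 : ℤ)^(j-1) *
      ∑ t ∈ range ((p-j)/2 + 1), ibinom ((n : ℤ) - p + j + 2*t) t *
        ∑ β ∈ range (p-j-2*t+1),
          2^(p-j-2*t-β) * ibinom ((n : ℤ) - ℓ) β * ibinom (ℓ : ℤ) ((p-j-2*t-β : ℕ)) *
          ∑ α ∈ range (β+1), ibinom (β : ℤ) α *
            ∑ i ∈ range j, ibinom ((r : ℤ) - i - p + j + α + t + n - 2) ((n : ℤ) - 2)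

/-- `Ã_p^{(ℓ)}(z) = z^p A_p^{(ℓ)}(z)`. -/
def Atilde (n p ℓ : ℕ) : PowerSeries ℤ :=
  ∑ j ∈ Icc 1 p, C (R := ℤ) ((-1 : ℤ)^(j-1)) *
    ∑ t ∈ range ((p-j)/2 + 1), C (R := ℤ) (ibinom ((n : ℤ) - p + j + 2*t) t) *
      ∑ β ∈ range (p-j-2*t+1),
        C (R := ℤ) (2^(p-j-2*t-β) * ibinom ((n : ℤ) - ℓ) β * ibinom (ℓ : ℤ) ((p-j-2*t-β : ℕ))) *
        ∑ α ∈ range (β+1), C (R := ℤ) (ibinom (β : ℤ) α) *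
          ∑ i ∈ range j, (X : PowerSeries ℤ)^(2*p - 2*(j+t+α-i))

/-- `Υ_m^{(ℓ)}(z)`; zero when `m < 0`. -/
def Upsilon {n : ℕ} (L : Set (Fin n → ℤ)) (m : ℤ) (ℓ : ℕ) : PowerSeries ℤ :=
  if m < 0 then 0 else
    ∑ h ∈ range (m.toNat + 1),
      C (R := ℤ) (∑ s ∈ range (h/2 + 1), (Ncard L (h - 2*s) ℓ : ℤ) * ((s + n - 2).choose (n-2) : ℤ)) *
        (X : PowerSeries ℤ)^h

/-- `B̃_{𝓛,p}^{(ℓ)}(z) = z^p B_{𝓛,p}^{(ℓ)}(z)`. -/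
def Btilde {n : ℕ} (L : Set (Fin n → ℤ)) (p ℓ : ℕ) : PowerSeries ℤ :=
  ∑ j ∈ Icc 1 p, C (R := ℤ) ((-1 : ℤ)^(j-1)) *
    ∑ t ∈ range ((p-j)/2 + 1), C (R := ℤ) (ibinom ((n : ℤ) - p + j + 2*t) t) *
      ∑ β ∈ range (p-j-2*t+1),
        C (R := ℤ) (2^(p-j-2*t-β) * ibinom ((n : ℤ) - ℓ) β * ibinom (ℓ : ℤ) ((p-j-2*t-β : ℕ))) *
        ∑ α ∈ range (β+1), C (R := ℤ) (ibinom (β : ℤ) α) *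
          ∑ i ∈ range j,
            (X : PowerSeries ℤ)^(2*p - 2*(j+t+α-i)) *
              Upsilon L (2*((j : ℤ) + t + α - i) - p - 1) ℓ

/-- `C_{p,g}^{(ℓ)}`. -/
def Cpg (n p g ℓ : ℕ) : ℤ :=
  ∑ j ∈ Icc 1 p, (-1 : ℤ)^(j-1) *
    ∑ t ∈ range ((p-j)/2 + 1), ibinom ((n : ℤ) - p + j + 2*t) t *
      ∑ β ∈ range (p-j-2*t+1),
        2^(p-j-2*t-β) * ibinom ((n : ℤ) - ℓ) β * ibinom (ℓ : ℤ) ((p-j-2*t-β : ℕ)) *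
        ∑ i ∈ range j, ibinom (β : ℤ) ((p : ℤ) + i - j - t - g)

/-!
Write `θ/(1 - z²)^(n-1)` for `ϑ_𝓛^{(ℓ)}` divided by `(1 - z²)^(n-1)`: its coefficients are
`Σ_s N_𝓛(h - 2s, ℓ) binom(s + n - 2, n - 2)`, and `Υ_m^{(ℓ)}` is its truncation at degree `m`.
Hence a single term of `ϑ Ã - (1 - z²)^(n-1) B̃`, indexed by `d = j + t + α - i`, equals
`(1 - z²)^(n-1) z^(2(p-d))` times the tail of `θ/(1 - z²)^(n-1)` beyond degree `2d - p - 1`, and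
after the shift `r = p - d + s` the coefficients of that tail are those entering `M_𝓛`.
All three of `Ã`, `B̃` and `M_𝓛` are the same additive combination over `(j, t, β, α, i)`, so the
identity holds summand by summand.
-/

theorem PowerSeries.coeff_mul_expand {R : Type*} [CommRing R] {q : ℕ} (hq : q ≠ 0)
    (f g : PowerSeries R) (m : ℕ) :
    coeff m (f * expand q hq g) = ∑ s ∈ range (m / q + 1), coeff (m - q * s) f * coeff s g := by
  rw [mul_comm, coeff_mul,
    Nat.sum_antidiagonal_eq_sum_range_succ (fun a b => coeff a _ * coeff b f)]
  simp only [coeff_expand, ite_mul, zero_mul]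
  rw [← sum_filter]
  refine (sum_nbij' (fun s => q * s) (fun b => b / q) ?_ ?_ ?_ ?_ ?_).symm
  · intro s hs
    simp only [mem_range, mem_filter] at hs ⊢
    exact ⟨by nlinarith [Nat.div_mul_le_self m q], dvd_mul_right q s⟩
  · intro b hb
    simp only [mem_range, mem_filter] at hb ⊢
    exact Nat.lt_succ_of_le (Nat.div_le_div_right (Nat.le_of_lt_succ hb.1))
  · intro s _
    exact Nat.mul_div_cancel_left s (Nat.pos_of_ne_zero hq)
  · intro b hb
    exact Nat.mul_div_cancel' (mem_filter.1 hb).2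
  · intro s _
    rw [Nat.mul_div_cancel_left s (Nat.pos_of_ne_zero hq), mul_comm]

lemma ibinom_natCast (b a : ℕ) : ibinom b a = b.choose a := by
  unfold ibinom
  split_ifs with h
  · rw [Nat.choose_eq_zero_of_lt (by omega)]
    simp
  · simp

lemma ibinom_eq_zero_of_lt {b a : ℤ} (h : b < a) : ibinom b a = 0 := by
  simp [ibinom, h]

def weightedSum {M : Type*} [AddCommGroup M] (n p ℓ : ℕ) : (ℕ → ℕ → ℕ → ℕ → M) →+ M where
  toFun f :=
    ∑ j ∈ Icc 1 p, (-1 : ℤ) ^ (j - 1) •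
      ∑ t ∈ range ((p - j) / 2 + 1), ibinom ((n : ℤ) - p + j + 2 * t) t •
        ∑ β ∈ range (p - j - 2 * t + 1),
          (2 ^ (p - j - 2 * t - β) * ibinom ((n : ℤ) - ℓ) β *
            ibinom (ℓ : ℤ) ((p - j - 2 * t - β : ℕ))) •
          ∑ α ∈ range (β + 1), ibinom (β : ℤ) α • ∑ i ∈ range j, f j t α i
  map_zero' := by simp
  map_add' f g := by simp only [Pi.add_apply, sum_add_distrib, smul_add]

section

variable {M : Type*} [AddCommGroup M]

lemma map_weightedSum {N F : Type*} [AddCommGroup N] [FunLike F M N] [AddMonoidHomClass F M N]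
    (n p ℓ : ℕ) (φ : F) (f : ℕ → ℕ → ℕ → ℕ → M) :
    φ (weightedSum n p ℓ f) = weightedSum n p ℓ fun j t α i => φ (f j t α i) := by
  simp only [weightedSum, AddMonoidHom.coe_mk, ZeroHom.coe_mk, map_sum, map_zsmul]

lemma mul_weightedSum {R : Type*} [NonUnitalNonAssocRing R] (n p ℓ : ℕ) (a : R)
    (f : ℕ → ℕ → ℕ → ℕ → R) :
    a * weightedSum n p ℓ f = weightedSum n p ℓ fun j t α i => a * f j t α i :=
  map_weightedSum n p ℓ (AddMonoidHom.mulLeft a) f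

lemma weightedSum_congr {n p ℓ : ℕ} {f g : ℕ → ℕ → ℕ → ℕ → M}
    (h : ∀ j t α i, i < j → j + t + α ≤ p → f j t α i = g j t α i) :
    weightedSum n p ℓ f = weightedSum n p ℓ g := by
  simp only [weightedSum, AddMonoidHom.coe_mk, ZeroHom.coe_mk]
  refine sum_congr rfl fun j hj => congrArg _ (sum_congr rfl fun t ht => congrArg _ <|
    sum_congr rfl fun β hβ => congrArg _ <| sum_congr rfl fun α hα => congrArg _ <|
    sum_congr rfl fun i hi => h j t α i (mem_range.1 hi) ?_)
  simp only [mem_Icc, mem_range] at hj ht hβ hα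
  omega

end

section

variable {n : ℕ} (L : Set (Fin n → ℤ))

def thetaDiv (ℓ : ℕ) : PowerSeries ℤ :=
  thetaL L ℓ * expand 2 two_ne_zero (invOneSubPow ℤ (n - 1) : PowerSeries ℤ)

lemma one_sub_X_sq_pow_mul_thetaDiv (ℓ : ℕ) :
    (1 - X ^ 2 : PowerSeries ℤ) ^ (n - 1) * thetaDiv L ℓ = thetaL L ℓ := by
  have h : (1 - X ^ 2 : PowerSeries ℤ) = expand 2 two_ne_zero (1 - X) := by
    simp [expand_X]
  rw [thetaDiv, h, mul_left_comm, ← map_pow, ← map_mul, ← invOneSubPow_inv_eq_one_sub_pow,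
    Units.inv_val, map_one, mul_one]

lemma coeff_thetaDiv (hn : 2 ≤ n) (ℓ m : ℕ) :
    coeff m (thetaDiv L ℓ) =
      ∑ s ∈ range (m / 2 + 1), (Ncard L (m - 2 * s) ℓ : ℤ) * ((s + n - 2).choose (n - 2) : ℤ) := by
  rw [thetaDiv, coeff_mul_expand, invOneSubPow_val_eq_mk_sub_one_add_choose_of_pos _ _ (by omega)]
  refine sum_congr rfl fun s _ => ?_
  rw [thetaL, coeff_mk, coeff_mk, show n - 1 - 1 + s = s + n - 2 by omega,
    show n - 1 - 1 = n - 2 by omega]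

lemma coeff_Upsilon (hn : 2 ≤ n) (M : ℤ) (ℓ m : ℕ) :
    coeff m (Upsilon L M ℓ) = if (m : ℤ) ≤ M then coeff m (thetaDiv L ℓ) else 0 := by
  unfold Upsilon
  split_ifs with hM hm hm
  · omega
  · simp
  · rw [map_sum, coeff_thetaDiv L hn]
    simp only [coeff_C_mul_X_pow]
    rw [sum_ite_eq, if_pos (by simp only [mem_range]; omega)]
  · rw [map_sum]
    simp only [coeff_C_mul_X_pow]
    rw [sum_ite_eq, if_neg (by simp only [mem_range]; omega)]

def tailSeries (p ℓ d : ℕ) : PowerSeries ℤ :=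
  PowerSeries.mk fun k =>
    ∑ r ∈ range ((k + p) / 2 + 1),
      (Ncard L (k + p - 2 * r) ℓ : ℤ) * ibinom ((r : ℤ) + d - p + n - 2) ((n : ℤ) - 2)

lemma coeff_tailSeries (hn : 2 ≤ n) {p ℓ d : ℕ} (hdp : d ≤ p) (k : ℕ) :
    coeff k (tailSeries L p ℓ d) =
      if p ≤ k + 2 * d then coeff (k + 2 * d - p) (thetaDiv L ℓ) else 0 := by
  have hvanish : ∀ r < p - d,
      (Ncard L (k + p - 2 * r) ℓ : ℤ) * ibinom ((r : ℤ) + d - p + n - 2) ((n : ℤ) - 2) = 0 :=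
    fun r hr => by rw [ibinom_eq_zero_of_lt (by omega), mul_zero]
  rw [tailSeries, coeff_mk]
  split_ifs with h
  · rw [show (k + p) / 2 + 1 = (p - d) + ((k + 2 * d - p) / 2 + 1) by omega, sum_range_add,
      sum_eq_zero fun r hr => hvanish r (mem_range.1 hr), zero_add, coeff_thetaDiv L hn]
    refine sum_congr rfl fun s _ => ?_
    rw [show k + p - 2 * (p - d + s) = k + 2 * d - p - 2 * s by omega,
      show ((p - d + s : ℕ) : ℤ) + d - p + n - 2 = ((s + n - 2 : ℕ) : ℤ) by omega,
      show (n : ℤ) - 2 = ((n - 2 : ℕ) : ℤ) by omega, ibinom_natCast]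
  · exact sum_eq_zero fun r hr => hvanish r (by rw [mem_range] at hr; omega)

lemma X_pow_mul_tailSeries (hn : 2 ≤ n) {p ℓ d : ℕ} (hdp : d ≤ p) :
    X ^ p * tailSeries L p ℓ d =
      X ^ (2 * (p - d)) * (thetaDiv L ℓ - Upsilon L (2 * (d : ℤ) - p - 1) ℓ) := by
  ext m
  rw [coeff_X_pow_mul', coeff_X_pow_mul', map_sub, coeff_Upsilon L hn]
  by_cases h1 : p ≤ m
  · rw [if_pos h1, coeff_tailSeries L hn hdp]
    by_cases h2 : 2 * (p - d) ≤ m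
    · rw [if_pos h2, if_pos (by omega), if_neg (by omega),
        show m - p + 2 * d - p = m - 2 * (p - d) by omega, sub_zero]
    · rw [if_neg h2, if_neg (by omega)]
  · rw [if_neg h1]
    by_cases h2 : 2 * (p - d) ≤ m
    · rw [if_pos h2, if_pos (by omega), sub_self]
    · rw [if_neg h2]

lemma thetaL_mul_sub_Upsilon (hn : 2 ≤ n) {p ℓ d : ℕ} (hdp : d ≤ p) :
    thetaL L ℓ * X ^ (2 * p - 2 * d)
        - (1 - X ^ 2) ^ (n - 1) * (X ^ (2 * p - 2 * d) * Upsilon L (2 * (d : ℤ) - p - 1) ℓ) =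
      X ^ p * (1 - X ^ 2) ^ (n - 1) * tailSeries L p ℓ d := by
  calc thetaL L ℓ * X ^ (2 * p - 2 * d)
        - (1 - X ^ 2) ^ (n - 1) * (X ^ (2 * p - 2 * d) * Upsilon L (2 * (d : ℤ) - p - 1) ℓ)
      = (1 - X ^ 2) ^ (n - 1) *
          (X ^ (2 * (p - d)) * (thetaDiv L ℓ - Upsilon L (2 * (d : ℤ) - p - 1) ℓ)) := by
        rw [← one_sub_X_sq_pow_mul_thetaDiv L ℓ, show 2 * p - 2 * d = 2 * (p - d) by omega]
        ring
    _ = X ^ p * (1 - X ^ 2) ^ (n - 1) * tailSeries L p ℓ d := by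
        rw [← X_pow_mul_tailSeries L hn hdp]
        ring

lemma Atilde_eq_weightedSum (n p ℓ : ℕ) :
    Atilde n p ℓ = weightedSum n p ℓ fun j t α i => X ^ (2 * p - 2 * (j + t + α - i)) := by
  simp only [Atilde, weightedSum, AddMonoidHom.coe_mk, ZeroHom.coe_mk, zsmul_eq_mul, eq_intCast]

lemma Btilde_eq_weightedSum (p ℓ : ℕ) :
    Btilde L p ℓ = weightedSum n p ℓ fun j t α i =>
      X ^ (2 * p - 2 * (j + t + α - i)) * Upsilon L (2 * ((j : ℤ) + t + α - i) - p - 1) ℓ := by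
  simp only [Btilde, weightedSum, AddMonoidHom.coe_mk, ZeroHom.coe_mk, zsmul_eq_mul, eq_intCast]

lemma Mcoef_succ_eq_weightedSum (k p : ℕ) :
    Mcoef L (k + 1) p = ∑ ℓ ∈ range (n + 1), ∑ r ∈ range ((k + p) / 2 + 1),
      (Ncard L (k + p - 2 * r) ℓ : ℤ) * weightedSum n p ℓ fun j t α i =>
        ibinom ((r : ℤ) - i - p + j + α + t + n - 2) ((n : ℤ) - 2) := by
  simp only [Mcoef, weightedSum, AddMonoidHom.coe_mk, ZeroHom.coe_mk, smul_eq_mul,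
    Nat.add_sub_cancel]

lemma thetaL_mul_Atilde_sub_Btilde (hn : 2 ≤ n) (p ℓ : ℕ) :
    thetaL L ℓ * Atilde n p ℓ - (1 - X ^ 2) ^ (n - 1) * Btilde L p ℓ =
      X ^ p * (1 - X ^ 2) ^ (n - 1) *
        weightedSum n p ℓ fun j t α i => tailSeries L p ℓ (j + t + α - i) := by
  rw [Atilde_eq_weightedSum, Btilde_eq_weightedSum, mul_weightedSum, mul_weightedSum,
    mul_weightedSum, ← map_sub]
  refine weightedSum_congr fun j t α i hij hp => ?_
  rw [Pi.sub_apply, Pi.sub_apply, Pi.sub_apply, Pi.sub_apply,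
    show (j : ℤ) + t + α - i = ((j + t + α - i : ℕ) : ℤ) by omega]
  exact thetaL_mul_sub_Upsilon L hn (by omega)

lemma mk_Mcoef_succ (p : ℕ) :
    PowerSeries.mk (fun k => Mcoef L (k + 1) p) =
      ∑ ℓ ∈ range (n + 1), weightedSum n p ℓ fun j t α i => tailSeries L p ℓ (j + t + α - i) := by
  ext k
  rw [coeff_mk, Mcoef_succ_eq_weightedSum, map_sum]
  refine sum_congr rfl fun ℓ _ => ?_
  simp only [mul_weightedSum, ← map_sum, map_weightedSum, tailSeries, coeff_mk]
  refine weightedSum_congr fun j t α i hij _ => ?_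
  simp only [Finset.sum_apply]
  refine sum_congr rfl fun r _ => ?_
  rw [show (r : ℤ) - i - p + j + α + t + n - 2 = r + ((j + t + α - i : ℕ) : ℤ) - p + n - 2 by omega]

end

theorem stmt7_general {n : ℕ} (hn : 2 ≤ n) (L : Set (Fin n → ℤ)) {p : ℕ} :
    (X : PowerSeries ℤ)^p * (1 - (X : PowerSeries ℤ)^2)^(n-1) *
        PowerSeries.mk (fun k => Mcoef L (k+1) p) =
      ∑ ℓ ∈ range (n+1),
        (thetaL L ℓ * Atilde n p ℓ - (1 - (X : PowerSeries ℤ)^2)^(n-1) * Btilde L p ℓ) := by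
  rw [mk_Mcoef_succ, mul_sum]
  exact sum_congr rfl fun ℓ _ => (thetaL_mul_Atilde_sub_Btilde L hn p ℓ).symm

/-- Claim 3.5:
`z^p (1-z^2)^{n-1} · Σ_{k≥0} M_𝓛(k+1,p) z^k
  = Σ_{ℓ=0}^{n} [ ϑ_𝓛^{(ℓ)}(z) Ã_p^{(ℓ)}(z) - (1-z^2)^{n-1} B̃_{𝓛,p}^{(ℓ)}(z) ]`. -/
theorem stmt7 {n : ℕ} (hn : 2 ≤ n) (L : Set (Fin n → ℤ)) {p : ℕ}
    (hp1 : 1 ≤ p) (hpn : p ≤ n) :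
    (X : PowerSeries ℤ)^p * (1 - (X : PowerSeries ℤ)^2)^(n-1) *
        PowerSeries.mk (fun k => Mcoef L (k+1) p) =
      ∑ ℓ ∈ range (n+1),
        (thetaL L ℓ * Atilde n p ℓ - (1 - (X : PowerSeries ℤ)^2)^(n-1) * Btilde L p ℓ) :=
  stmt7_general hn L
end
end

section
/- Let n ≥ 2, let 𝓛 be any subset of ℤⁿ, and let 1 ≤ p ≤ n. Then Σ_{ℓ=0}^{n} B̃_{𝓛,p}^{(ℓ)}(z) = Σ_{g=0}^{⌊(p−1)/2⌋} z^{2g} Σ_{ℓ=n+1+2g−p}^{n} Υ_{p−1−2g}^{(ℓ)}(z) · C_{p,g}^{(ℓ)}. (This is identity (3.7) in the proof of Theorem 2.2; it uses that Υ_m^{(ℓ)}(z) = 0 whenever m < 0 or n−ℓ > m, since N_𝓛(k,ℓ) = 0 for k < n−ℓ.) -/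
noncomputable section

open Finset PowerSeries

/-!
Expanding `C_{p,g}^{(ℓ)}` and moving the sum over `g` inside, the innermost sum
`Σ_g z^{2g} Υ_{p-1-2g}^{(ℓ)} binom(β, p+i-j-t-g)` becomes the `α`-sum of `B̃_{𝓛,p}^{(ℓ)}`
after the substitution `α = p+i-j-t-g`. The truncated ranges of `g` and `ℓ` on the right-hand
side lose nothing: the terms they cut off vanish, because `Υ_m^{(ℓ)} = 0` for `m < 0` and for `m < n - ℓ`
(a vector with `ℓ` zero coordinates has one-norm at least `n - ℓ`).
-/

lemma card_filter_ne_zero_le_onenorm {n : ℕ} (μ : Fin n → ℤ) :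
    #{i | μ i ≠ 0} ≤ onenorm μ :=
  calc #{i | μ i ≠ 0} = ∑ i with μ i ≠ 0, 1 := by rw [card_eq_sum_ones]
    _ ≤ ∑ i with μ i ≠ 0, (μ i).natAbs :=
        sum_le_sum fun i hi => Int.natAbs_pos.mpr (mem_filter.mp hi).2
    _ ≤ onenorm μ := sum_le_sum_of_subset (filter_subset _ _)

lemma le_zcount_add_onenorm {n : ℕ} (μ : Fin n → ℤ) : n ≤ zcount μ + onenorm μ := by
  have hsplit : zcount μ + #{i | μ i ≠ 0} = n := by
    rw [zcount, card_filter_add_card_filter_not, card_univ, Fintype.card_fin]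
  have := card_filter_ne_zero_le_onenorm μ
  omega

lemma Ncard_eq_zero_of_add_lt {n : ℕ} (L : Set (Fin n → ℤ)) {k ℓ : ℕ} (h : k + ℓ < n) :
    Ncard L k ℓ = 0 := by
  have hempty : {μ : Fin n → ℤ | μ ∈ L ∧ onenorm μ = k ∧ zcount μ = ℓ} = ∅ := by
    refine Set.eq_empty_of_forall_notMem fun μ ⟨_, hk, hℓ⟩ => ?_
    have := le_zcount_add_onenorm μ
    omega
  rw [Ncard, hempty, Set.ncard_empty]

lemma Upsilon_eq_zero_of_neg {n : ℕ} (L : Set (Fin n → ℤ)) {m : ℤ} {ℓ : ℕ} (hm : m < 0) :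
    Upsilon L m ℓ = 0 :=
  if_pos hm

lemma Upsilon_eq_zero_of_lt {n : ℕ} (L : Set (Fin n → ℤ)) {m : ℤ} {ℓ : ℕ}
    (h : m < (n : ℤ) - ℓ) : Upsilon L m ℓ = 0 := by
  unfold Upsilon
  split_ifs with hm
  · rfl
  refine sum_eq_zero fun k hk => ?_
  rw [mem_range] at hk
  rw [sum_eq_zero fun s _ => by
    rw [Ncard_eq_zero_of_add_lt L (by omega), Nat.cast_zero, zero_mul], map_zero, zero_mul]

lemma ibinom_eq_zero {b a : ℤ} (h : a < 0 ∨ b < a) : ibinom b a = 0 :=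
  if_pos h

lemma sum_range_mul_reflect {M : Type*} [CommSemiring M] (f : ℕ → M) (b : ℤ → M)
    {β c p : ℕ} (hb : ∀ a : ℤ, a < 0 ∨ β < a → b a = 0) (hβc : β ≤ c) (hcp : c < p) :
    ∑ g ∈ range p, f g * b (c - g) = ∑ α ∈ range (β + 1), b α * f (c - α) := by
  symm
  refine sum_of_injOn (fun α => c - α) ?_ ?_ ?_ ?_
  · intro a ha a' ha' h
    simp only [coe_range, Set.mem_Iio] at ha ha' h
    omega
  · intro a ha
    simp only [coe_range, Set.mem_Iio] at ha ⊢
    omega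
  · intro g _ hg
    rw [hb _ ?_, mul_zero]
    by_contra! hmem
    refine hg ⟨(c - g : ℤ).toNat, ?_, ?_⟩
    · simp only [coe_range, Set.mem_Iio]
      omega
    · dsimp only
      omega
  · intro α hα
    rw [mem_range] at hα
    rw [Nat.cast_sub (by omega), sub_sub_cancel, mul_comm]

lemma sum_mul_sum_mul_left_comm {ι κ M : Type*} [CommSemiring M] (s : Finset ι) (t : Finset κ)
    (u : ι → M) (a : κ → M) (f : κ → ι → M) :
    ∑ g ∈ s, u g * ∑ j ∈ t, a j * f j g = ∑ j ∈ t, a j * ∑ g ∈ s, u g * f j g := by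
  simp only [mul_sum]
  rw [sum_comm]
  exact sum_congr rfl fun j _ => sum_congr rfl fun g _ => mul_left_comm _ _ _

lemma sum_range_Upsilon_mul_sum_ibinom {n : ℕ} (L : Set (Fin n → ℤ)) {p j t β ℓ : ℕ}
    (h : j + 2 * t + β ≤ p) :
    ∑ g ∈ range p, ((X : PowerSeries ℤ) ^ (2 * g) * Upsilon L ((p : ℤ) - 1 - 2 * g) ℓ) *
        ∑ i ∈ range j, C (R := ℤ) (ibinom (β : ℤ) ((p : ℤ) + i - j - t - g))
      = ∑ α ∈ range (β + 1), C (R := ℤ) (ibinom (β : ℤ) α) *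
        ∑ i ∈ range j, (X : PowerSeries ℤ) ^ (2 * p - 2 * (j + t + α - i)) *
          Upsilon L (2 * ((j : ℤ) + t + α - i) - p - 1) ℓ := by
  simp only [mul_sum]
  rw [sum_comm, sum_comm (s := range (β + 1))]
  refine sum_congr rfl fun i hi => ?_
  rw [mem_range] at hi
  have hc : ((p + i - j - t : ℕ) : ℤ) = p + i - j - t := by omega
  simp only [← hc]
  rw [sum_range_mul_reflect (fun g => X ^ (2 * g) * Upsilon L ((p : ℤ) - 1 - 2 * g) ℓ)
    (fun a => C (ibinom β a)) (fun a ha => by rw [ibinom_eq_zero (by omega), map_zero])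
    (by omega) (by omega)]
  refine sum_congr rfl fun α hα => ?_
  rw [mem_range] at hα
  rw [show 2 * (p + i - j - t - α) = 2 * p - 2 * (j + t + α - i) by omega,
    show (p : ℤ) - 1 - 2 * ((p + i - j - t - α : ℕ) : ℤ) = 2 * ((j : ℤ) + t + α - i) - p - 1 by
      omega]

lemma Btilde_eq_sum_range {n : ℕ} (L : Set (Fin n → ℤ)) (p ℓ : ℕ) :
    Btilde L p ℓ = ∑ g ∈ range p, (X : PowerSeries ℤ) ^ (2 * g) *
      (Upsilon L ((p : ℤ) - 1 - 2 * g) ℓ * C (R := ℤ) (Cpg n p g ℓ)) := by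
  simp only [Btilde, Cpg, map_sum, map_mul, ← mul_assoc]
  rw [sum_mul_sum_mul_left_comm]
  refine sum_congr rfl fun j hj => ?_
  rw [mem_Icc] at hj
  rw [sum_mul_sum_mul_left_comm]
  refine congrArg _ (sum_congr rfl fun t ht => ?_)
  rw [mem_range] at ht
  rw [sum_mul_sum_mul_left_comm]
  refine congrArg _ (sum_congr rfl fun β hβ => ?_)
  rw [mem_range] at hβ
  exact congrArg _ (sum_range_Upsilon_mul_sum_ibinom L (by omega)).symm

lemma sum_Icc_Upsilon_mul_eq_sum_range {n : ℕ} (L : Set (Fin n → ℤ)) (p g : ℕ)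
    (c : ℕ → PowerSeries ℤ) :
    ∑ ℓ ∈ Icc (n + 1 + 2 * g - p) n, Upsilon L ((p : ℤ) - 1 - 2 * g) ℓ * c ℓ =
      ∑ ℓ ∈ range (n + 1), Upsilon L ((p : ℤ) - 1 - 2 * g) ℓ * c ℓ := by
  refine sum_subset (fun ℓ hℓ => by rw [mem_Icc] at hℓ; rw [mem_range]; omega) ?_
  intro ℓ hℓ hℓ'
  rw [mem_range] at hℓ
  rw [mem_Icc] at hℓ'
  rw [Upsilon_eq_zero_of_lt L (by omega), zero_mul]

theorem stmt17_general {n : ℕ} (L : Set (Fin n → ℤ)) {p : ℕ} :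
    ∑ ℓ ∈ range (n+1), Btilde L p ℓ =
      ∑ g ∈ range ((p-1)/2 + 1), (X : PowerSeries ℤ)^(2*g) *
        ∑ ℓ ∈ Icc (n + 1 + 2*g - p) n,
          Upsilon L ((p : ℤ) - 1 - 2*g) ℓ * C (R := ℤ) (Cpg n p g ℓ) := by
  have hvanish : ∀ g ≥ (p + 1) / 2, (X : PowerSeries ℤ) ^ (2 * g) *
      ∑ ℓ ∈ range (n + 1), Upsilon L ((p : ℤ) - 1 - 2 * g) ℓ * C (R := ℤ) (Cpg n p g ℓ) = 0 :=
    fun g hg => by simp [Upsilon_eq_zero_of_neg L (show (p : ℤ) - 1 - 2 * g < 0 by omega)]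
  simp only [Btilde_eq_sum_range, sum_Icc_Upsilon_mul_eq_sum_range]
  rw [sum_comm]
  simp only [← mul_sum]
  rw [eventually_constant_sum hvanish (n := p) (by omega),
    eventually_constant_sum hvanish (n := (p - 1) / 2 + 1) (by omega)]

/-- identity (3.7):
`Σ_{ℓ=0}^{n} B̃_{𝓛,p}^{(ℓ)}(z) = Σ_{g=0}^{⌊(p-1)/2⌋} z^{2g}
  Σ_{ℓ=n+1+2g-p}^{n} Υ_{p-1-2g}^{(ℓ)}(z) C_{p,g}^{(ℓ)}`. -/
theorem stmt17 {n : ℕ} (hn : 2 ≤ n) (L : Set (Fin n → ℤ)) {p : ℕ}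
    (hp1 : 1 ≤ p) (hpn : p ≤ n) :
    ∑ ℓ ∈ range (n+1), Btilde L p ℓ =
      ∑ g ∈ range ((p-1)/2 + 1), (X : PowerSeries ℤ)^(2*g) *
        ∑ ℓ ∈ Icc (n + 1 + 2*g - p) n,
          Upsilon L ((p : ℤ) - 1 - 2*g) ℓ * C (R := ℤ) (Cpg n p g ℓ) :=
  stmt17_general L
end
end
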